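/- arXiv:2309.12655 — 2 statements merged into one kernel-verified Lean document; each statement's English description precedes it below -/
import Mathlib

section
/- Natural revision is not recalcitrant in general: starting from the order C_x = [x, ¬x] over alphabet {x,y}, the sequence C_x nat(true>y) nat(true>¬x) falsifies true>y, even though an order satisfying both true>y and true>¬x exists. -/
open Classical

/- Models are elements of a finite type `M`; propositional formulas are identified with
their sets of models (`Set M`).  A connected preorder (ordered partition
`[C(0),…,C(m)]`, classes possibly empty) is represented by its rank function
`r : M → ℕ`, where `r I` is the index of the class of `I`.  Equality of orders means
equality of the induced binary relations (`sameOrd`). -/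

/-- least class index containing a model of `F` -/
noncomputable def minidx {M : Type*} (r : M → ℕ) (F : Set M) : ℕ := sInf (r '' F)

/-- greatest class index containing a model of `F` -/
noncomputable def maxidx {M : Type*} (r : M → ℕ) (F : Set M) : ℕ := sSup (r '' F)

/-- propositional natural revision:
`C nat(A) = [C(minidx A)∩A, C(0),…,C(minidx A−1), C(minidx A)∖A, C(minidx A+1),…,C(m)]` -/
noncomputable def natSimple {M : Type*} (r : M → ℕ) (A : Set M) : M → ℕ :=
  fun I => if I ∈ A ∧ r I = minidx r A then 0 else r I + 1

/-- conditional natural revision: the models of `P∧¬A` in classes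
`minidx(P)..minidx(P∧A)` are dropped below the other models of those classes. -/
noncomputable def natRev {M : Type*} (r : M → ℕ) (P A : Set M) : M → ℕ := fun I =>
  if r I < minidx r P then r I
  else if r I ≤ minidx r (P ∩ A) then
    (if I ∈ P ∩ Aᶜ then r I + (minidx r (P ∩ A) - minidx r P + 1) else r I)
  else r I + (minidx r (P ∩ A) - minidx r P + 1)

/-- uncontingent revision: the models of `P∧¬A` in classes
`minidx(P)..maxidx(P∧A)` are dropped below the other models of those classes. -/
noncomputable def uncRev {M : Type*} (r : M → ℕ) (P A : Set M) : M → ℕ := fun I =>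
  if r I < minidx r P then r I
  else if r I ≤ maxidx r (P ∩ A) then
    (if I ∈ P ∩ Aᶜ then r I + (maxidx r (P ∩ A) - minidx r P + 1) else r I)
  else r I + (maxidx r (P ∩ A) - minidx r P + 1)

/-- lexicographic revision: `C lex(F) = [C(0)∩F,…,C(m)∩F, C(0)∖F,…,C(m)∖F]` -/
noncomputable def lexRev {M : Type*} [Fintype M] (r : M → ℕ) (F : Set M) : M → ℕ := fun I =>
  if I ∈ F then r I else r I + (Finset.univ.sup r + 1)

/-- line-down revision: the minimal models of `P∧A` are lifted to a new class just
above class `minidx(P∧¬A)`; all other models keep their classes. -/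
noncomputable def dowRev {M : Type*} (r : M → ℕ) (P A : Set M) : M → ℕ := fun I =>
  if minidx r (P ∩ A) < minidx r (P ∩ Aᶜ) then r I
  else if I ∈ P ∩ A ∧ r I = minidx r (P ∩ A) then minidx r (P ∩ Aᶜ)
  else if r I < minidx r (P ∩ Aᶜ) then r I
  else r I + 1

/-- an order satisfies the conditional `P>A` iff every minimal model of `P∧A`
is strictly below every model of `P∧¬A` -/
def satisfiesCond {M : Type*} (r : M → ℕ) (P A : Set M) : Prop :=
  ∀ I ∈ P ∩ A, (∀ J ∈ P ∩ A, r I ≤ r J) → ∀ K ∈ P ∩ Aᶜ, r I < r K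

/-- the order viewed as a set of pairs `I ≤ J` -/
def ordRel {M : Type*} (r : M → ℕ) : Set (M × M) := {p | r p.1 ≤ r p.2}

/-- difference of two orders: symmetric difference of their sets of pairs -/
def diffOrd {M : Type*} (r r' : M → ℕ) : Set (M × M) := symmDiff (ordRel r) (ordRel r')

/-- equality of the induced connected preorders -/
def sameOrd {M : Type*} (r r' : M → ℕ) : Prop := ∀ I J : M, (r I ≤ r J ↔ r' I ≤ r' J)

/-- the order `C_x = [{xy, x¬y}, {¬xy, ¬x¬y}]` over the alphabet `{x,y}`;
a model is a pair `(x, y)` of Boolean values. -/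
def Cx : Bool × Bool → ℕ := fun m => if m.1 then 0 else 1

/-- the formula `y` -/
def Yset : Set (Bool × Bool) := {m | m.2 = true}

/-- the formula `x` -/
def Xset : Set (Bool × Bool) := {m | m.1 = true}

/-- the order `[{xy}, {x¬y}, {¬xy, ¬x¬y}]` -/
def targetNat : Bool × Bool → ℕ := fun m =>
  if m.1 then (if m.2 then 0 else 1) else 2


lemma mA : minidx Cx Set.univ = 0 :=
  Nat.sInf_eq_zero.mpr (Or.inl ⟨(true, true), Set.mem_univ _, rfl⟩)

lemma mB : minidx Cx (Set.univ ∩ Yset) = 0 :=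
  Nat.sInf_eq_zero.mpr (Or.inl ⟨(true, true), ⟨Set.mem_univ _, rfl⟩, rfl⟩)

lemma mC : minidx targetNat Set.univ = 0 :=
  Nat.sInf_eq_zero.mpr (Or.inl ⟨(true, true), Set.mem_univ _, rfl⟩)

lemma mD : minidx targetNat (Set.univ ∩ Xsetᶜ) = 2 := by
  have himg : targetNat '' (Set.univ ∩ Xsetᶜ) = {2} := by
    ext n
    constructor
    · rintro ⟨m, ⟨-, hm⟩, rfl⟩
      have : m.1 = false := by simpa [Xset] using hm
      simp [targetNat, this]
    · rintro rfl
      exact ⟨(false, true), ⟨Set.mem_univ _, by simp [Xset]⟩, rfl⟩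
  unfold minidx
  rw [himg, csInf_singleton]

lemma h1 : natRev Cx Set.univ Yset = targetNat := by
  funext m
  rcases m with ⟨x, y⟩
  cases x <;> cases y <;>
    · simp only [natRev]; rw [mA, mB]; simp [Cx, targetNat, Yset]

lemma h2 : natRev (natRev Cx Set.univ Yset) Set.univ Xsetᶜ =
    fun m => if m.1 then (if m.2 then 3 else 4) else 2 := by
  rw [h1]
  funext m
  rcases m with ⟨x, y⟩
  cases x <;> cases y <;>
    · simp only [natRev]; rw [mC, mD]; simp [targetNat, Xset]

/-- natural revision is not recalcitrant in general: starting from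
`C_x = [x, ¬x]`, the sequence `C_x nat(true>y) nat(true>¬x)` falsifies `true>y`,
although an order satisfying both `true>y` and `true>¬x` exists. -/
theorem natural_recalcitrant_not :
    (∃ r' : Bool × Bool → ℕ,
        satisfiesCond r' Set.univ Yset ∧ satisfiesCond r' Set.univ Xsetᶜ) ∧
    ¬ satisfiesCond (natRev (natRev Cx Set.univ Yset) Set.univ Xsetᶜ) Set.univ Yset := by
  constructor
  · refine ⟨fun m => if m.1 = false ∧ m.2 = true then 0 else 1, ?_, ?_⟩
    · rintro ⟨a, b⟩ ⟨-, hb⟩ hmin ⟨c, d⟩ ⟨-, hd⟩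
      have hd' : d = false := by simpa [Yset] using hd
      have h0 : (if a = false ∧ b = true then 0 else 1) ≤ 0 :=
        hmin (false, true) ⟨Set.mem_univ _, rfl⟩
      simp at h0
      simp [h0, hd']
    · rintro ⟨a, b⟩ ⟨-, ha⟩ hmin ⟨c, d⟩ ⟨-, hc⟩
      have hc' : c = true := by simpa [Xset] using hc
      have h0 : (if a = false ∧ b = true then 0 else 1) ≤ 0 :=
        hmin (false, true) ⟨Set.mem_univ _, by simp [Xset]⟩
      simp at h0
      simp [h0, hc']
  · intro h
    have := h (false, true) ⟨Set.mem_univ _, rfl⟩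
      (by rintro ⟨c, d⟩ ⟨-, hd⟩
          have : d = true := hd
          rw [h2]
          cases c <;> simp [this])
      (false, false) ⟨Set.mem_univ _, by simp [Yset]⟩
    rw [h2] at this
    simp at this
end

section
/- Reduction of uncontingent revision to lexicographic revision: for every connected preorder C and conditional P>A with P∧A satisfiable, C unc(P>A) = C lex((≤max(P∧A)) ∧ (P → A)), where (≤max(P∧A)) is the set of models in classes 0 through maxidx(P∧A). -/
open Classical

/- Both revisions keep the old order inside `F = (≤max(P∧A)) ∧ (P → A)` and inside its
complement, and put all of `F` below its complement.  Uncontingent revision does this by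
shifting the complement of `F` up by `maxidx(P∧A) − minidx(P) + 1`: a model outside `F` lies
either above class `maxidx(P∧A)` or in `P`, hence in class `minidx(P)` or higher, so the shift
lifts it above every model of `F`.  Lexicographic revision shifts the same set by a larger
constant, and any two shifts that separate `F` from its complement induce the same order. -/

section

variable {M : Type*} (r : M → ℕ)

noncomputable def shiftOutside (F : Set M) (c : ℕ) : M → ℕ :=
  fun I => if I ∈ F then r I else r I + c

theorem sameOrd_shiftOutside {F : Set M} {c c' : ℕ}
    (hc : ∀ I ∈ F, ∀ J ∉ F, r I < r J + c) (hc' : ∀ I ∈ F, ∀ J ∉ F, r I < r J + c') :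
    sameOrd (shiftOutside r F c) (shiftOutside r F c') := by
  intro I J
  by_cases hI : I ∈ F <;> by_cases hJ : J ∈ F <;>
    simp only [shiftOutside, hI, hJ, if_true, if_false]
  · exact ⟨fun _ => by have := hc' I hI J hJ; omega, fun _ => by have := hc I hI J hJ; omega⟩
  · exact ⟨fun _ => by have := hc J hJ I hI; omega, fun _ => by have := hc' J hJ I hI; omega⟩
  · omega

theorem lexRev_eq_shiftOutside [Fintype M] (F : Set M) :
    lexRev r F = shiftOutside r F (Finset.univ.sup r + 1) := rfl

theorem lt_add_sup_succ [Fintype M] (I J : M) : r I < r J + (Finset.univ.sup r + 1) := by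
  have := Finset.le_sup (f := r) (Finset.mem_univ I)
  omega

theorem minidx_le {F : Set M} {I : M} (hI : I ∈ F) : minidx r F ≤ r I :=
  csInf_le (OrderBot.bddBelow _) ⟨I, hI, rfl⟩

theorem le_maxidx [Finite M] {F : Set M} {I : M} (hI : I ∈ F) : r I ≤ maxidx r F :=
  le_csSup (Set.toFinite _).bddAbove ⟨I, hI, rfl⟩

theorem uncRev_eq_shiftOutside [Finite M] (P A : Set M) (h : (P ∩ A).Nonempty) :
    uncRev r P A = shiftOutside r ({I | r I ≤ maxidx r (P ∩ A)} ∩ (Pᶜ ∪ A))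
      (maxidx r (P ∩ A) - minidx r P + 1) := by
  obtain ⟨x, hx⟩ := h
  have hpm : minidx r P ≤ maxidx r (P ∩ A) := (minidx_le r hx.1).trans (le_maxidx r hx)
  funext K
  have hP : K ∈ P → minidx r P ≤ r K := minidx_le r
  unfold uncRev shiftOutside
  split_ifs <;> grind

end

/-- reduction of uncontingent revision to lexicographic revision:
`C unc(P>A) = C lex((≤max(P∧A)) ∧ (P → A))`. -/
theorem uncontingent_lexicographic {M : Type*} [Fintype M] (r : M → ℕ) (P A : Set M)
    (h : (P ∩ A).Nonempty) :
    sameOrd (uncRev r P A)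
      (lexRev r ({I : M | r I ≤ maxidx r (P ∩ A)} ∩ (Pᶜ ∪ A))) := by
  rw [uncRev_eq_shiftOutside r P A h, lexRev_eq_shiftOutside]
  refine sameOrd_shiftOutside r ?_ fun I _ J _ => lt_add_sup_succ r I J
  rintro I ⟨hIm : r I ≤ maxidx r (P ∩ A), -⟩ J hJ
  by_cases hJm : r J ≤ maxidx r (P ∩ A)
  · have hJP : J ∈ P := by_contra fun hJP => hJ ⟨hJm, Or.inl hJP⟩
    have := minidx_le r hJP
    omega
  · omega
end
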